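/- arXiv:1710.01831 — 5 statements merged into one kernel-verified Lean document; each statement's English description precedes it below -/
import Mathlib

section
/- Let f : ℝ × ℝ → ℝ be continuous, let t₀, x₀ ∈ ℝ and let c₀ = −1. Define the IFOHAM sequence u : ℕ → (ℝ → ℝ) by u₀(t) = x₀ and u_{m+1}(t) = c₀ · ∫_{t₀}^{t} [ (d/dξ) Σ_{k=0}^{m} u_k(ξ) − f(ξ, Σ_{k=0}^{m} u_k(ξ)) ] dξ for m ≥ 0 (so that each u_{m+1}(t₀) = 0), and define the Picard–Lindelöf iterates x : ℕ → (ℝ → ℝ) by x₀(t) = x₀ and x_{m+1}(t) = x₀ + ∫_{t₀}^{t} f(ξ, x_m(ξ)) dξ. Then for every m ∈ ℕ and every t ∈ ℝ, x_m(t) = Σ_{k=0}^{m} u_k(t); that is, the partial sums of the IFOHAM sequence with convergence control parameter c₀ = −1 coincide with the Picard–Lindelöf iterates. -/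
/-!
Each Picard iterate is `C¹` and equals `x₀` at `t₀`, so by the fundamental theorem of calculus
`∫_{t₀}^{t} (y' - f(ξ, y)) dξ = y(t) - x₀ - ∫_{t₀}^{t} f(ξ, y) dξ` for `y = x_m`. With `c₀ = -1`,
adding `u_{m+1}` to the partial sum `x_m` therefore cancels `x_m(t)` and leaves exactly the
Picard step `x₀ + ∫_{t₀}^{t} f(ξ, x_m(ξ)) dξ`.
-/

open intervalIntegral

theorem contDiff_one_const_add_integral {g : ℝ → ℝ} (hg : Continuous g) (a t₀ : ℝ) :
    ContDiff ℝ 1 fun t => a + ∫ ξ in t₀..t, g ξ := by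
  have hderiv : ∀ t, HasDerivAt (fun t => a + ∫ ξ in t₀..t, g ξ) (g t) t := fun t =>
    (hg.integral_hasStrictDerivAt t₀ t).hasDerivAt.const_add a
  refine contDiff_one_iff_deriv.2 ⟨fun t => (hderiv t).differentiableAt, ?_⟩
  rwa [funext fun t => (hderiv t).deriv]

theorem integral_deriv_sub_eq {y g : ℝ → ℝ} (hy : ContDiff ℝ 1 y) (hg : Continuous g)
    (a b : ℝ) : ∫ ξ in a..b, (deriv y ξ - g ξ) = y b - y a - ∫ ξ in a..b, g ξ := by
  have hy' : Continuous (deriv y) := hy.continuous_deriv le_rfl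
  rw [integral_sub (hy'.intervalIntegrable a b) (hg.intervalIntegrable a b),
    integral_deriv_eq_sub (fun ξ _ => hy.differentiable one_ne_zero ξ)
      (hy'.intervalIntegrable a b)]

section PicardIterates

variable {f : ℝ → ℝ → ℝ} {t₀ x₀ : ℝ} {x : ℕ → ℝ → ℝ}

theorem continuous_comp_graph (hf : Continuous fun p : ℝ × ℝ => f p.1 p.2) {y : ℝ → ℝ}
    (hy : Continuous y) : Continuous fun ξ => f ξ (y ξ) :=
  hf.comp (continuous_id.prodMk hy)

theorem picardIterate_apply_initial (hx0 : ∀ t, x 0 t = x₀)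
    (hx : ∀ m t, x (m + 1) t = x₀ + ∫ ξ in t₀..t, f ξ (x m ξ)) : ∀ m, x m t₀ = x₀
  | 0 => hx0 t₀
  | m + 1 => by rw [hx m t₀, integral_same, add_zero]

theorem contDiff_one_picardIterate (hf : Continuous fun p : ℝ × ℝ => f p.1 p.2)
    (hx0 : ∀ t, x 0 t = x₀)
    (hx : ∀ m t, x (m + 1) t = x₀ + ∫ ξ in t₀..t, f ξ (x m ξ)) : ∀ m, ContDiff ℝ 1 (x m)
  | 0 => by rw [funext hx0]; exact contDiff_const
  | m + 1 => by
    rw [funext (hx m)]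
    exact contDiff_one_const_add_integral
      (continuous_comp_graph hf (contDiff_one_picardIterate hf hx0 hx m).continuous) x₀ t₀

end PicardIterates

/-- Theorem 1: with convergence control parameter `c₀ = -1`, the partial sums of
the IFOHAM sequence coincide with the Picard–Lindelöf iterates. -/
theorem stmt_1 (f : ℝ → ℝ → ℝ) (hf : Continuous fun p : ℝ × ℝ => f p.1 p.2)
    (t₀ x₀ : ℝ) (c₀ : ℝ) (hc₀ : c₀ = -1)
    (u : ℕ → ℝ → ℝ)
    (hu0 : ∀ t, u 0 t = x₀)
    (hu : ∀ m t, u (m + 1) t =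
      c₀ * ∫ ξ in t₀..t,
        (deriv (fun s => ∑ k ∈ Finset.range (m + 1), u k s) ξ
          - f ξ (∑ k ∈ Finset.range (m + 1), u k ξ)))
    (x : ℕ → ℝ → ℝ)
    (hx0 : ∀ t, x 0 t = x₀)
    (hx : ∀ m t, x (m + 1) t = x₀ + ∫ ξ in t₀..t, f ξ (x m ξ)) :
    ∀ m t, x m t = ∑ k ∈ Finset.range (m + 1), u k t := by
  intro m
  induction m with
  | zero => simp [hx0, hu0]
  | succ m ih =>
    intro t
    have hxm : ContDiff ℝ 1 (x m) := contDiff_one_picardIterate hf hx0 hx m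
    rw [Finset.sum_range_succ, hu, hc₀]
    simp only [← ih]
    rw [integral_deriv_sub_eq hxm (continuous_comp_graph hf hxm.continuous),
      picardIterate_apply_initial hx0 hx m, hx]
    ring
end

section
/- Let f : ℝ × ℝ → ℝ be continuous, let (t₀, x₀) ∈ ℝ², let a, b > 0, and set R = {(t,x) : |t − t₀| ≤ a and |x − x₀| ≤ b}. Suppose f satisfies a Lipschitz condition with respect to the second variable on R with constant L, let M = max_{(t,x)∈R} |f(t,x)|, M > 0, and A = min{a, b/M}. Let x : I → ℝ be the unique solution of the initial value problem dx/dt = f(t,x), x(t₀) = x₀, on the open interval I = (t₀ − A, t₀ + A). Define the IFOHAM sequence u : ℕ → (ℝ → ℝ) with convergence control parameter c₀ = −1 by u₀(t) = x₀ and u_{m+1}(t) = c₀ · ∫_{t₀}^{t} [ (d/dξ) Σ_{k=0}^{m} u_k(ξ) − f(ξ, Σ_{k=0}^{m} u_k(ξ)) ] dξ. Then the sequence of partial sums ( Σ_{k=0}^{n} u_k )_{n∈ℕ} converges uniformly on I to the solution x. -/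
/-!
With `c₀ = -1` the IFOHAM recursion telescopes: if `S m` is the `m`-th partial sum, then
`S (m + 1) t = S m t - (S m t - S m t₀) + ∫ f ξ (S m ξ) = x₀ + ∫_{t₀}^t f ξ (S m ξ)`,
so the partial sums are exactly the Picard iterates of the constant curve `x₀`.
On `I` we have `M |t - t₀| < b`, so a barrier argument keeps the solution in the strip
`|x - x₀| < b`, where the Lipschitz condition gives the classical estimate
`|S n t - x t| ≤ b (L |t - t₀|) ^ n / n!`, which tends to `0` uniformly on `I`.
-/

open Set Filter Function MeasureTheory intervalIntegral ODE
open scoped Nat Topology Interval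

theorem tendstoUniformlyOn_of_dist_le_of_tendsto {ι α β : Type*} [PseudoMetricSpace β]
    {F : ι → α → β} {g : α → β} {p : Filter ι} {s : Set α} {c : ι → ℝ}
    (h : ∀ n, ∀ t ∈ s, dist (g t) (F n t) ≤ c n) (hc : Tendsto c p (𝓝 0)) :
    TendstoUniformlyOn F g p s :=
  Metric.tendstoUniformlyOn_iff.2 fun ε hε =>
    (hc.eventually (gt_mem_nhds hε)).mono fun n (hn : c n < ε) t ht => (h n t ht).trans_lt hn

theorem abs_integral_le_pow_div_factorial {F : ℝ → ℝ} {t₀ t C K : ℝ} {m : ℕ}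
    (hF : ∀ s ∈ Ι t₀ t, |F s| ≤ K * (C * (K * |s - t₀|) ^ m / m !)) :
    |∫ s in t₀..t, F s| ≤ C * (K * |t - t₀|) ^ (m + 1) / (m + 1)! := by
  have hint : IntegrableOn (fun s => K * (C * (K * |s - t₀|) ^ m / m !)) (Ι t₀ t) :=
    Continuous.integrableOn_uIoc (by fun_prop)
  calc |∫ s in t₀..t, F s| = ‖∫ s in Ι t₀ t, F s‖ := norm_intervalIntegral_eq F t₀ t volume
    _ ≤ ∫ s in Ι t₀ t, K * (C * (K * |s - t₀|) ^ m / m !) :=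
        norm_integral_le_of_norm_le hint ((ae_restrict_mem measurableSet_uIoc).mono hF)
    _ = C * (K * |t - t₀|) ^ (m + 1) / (m + 1)! := by
        simp_rw [mul_pow, mul_div_assoc]
        rw [MeasureTheory.integral_const_mul, MeasureTheory.integral_const_mul,
          MeasureTheory.integral_const_mul, MeasureTheory.integral_div,
          integral_pow_abs_sub_uIoc, Nat.factorial_succ, Nat.cast_mul]
        push_cast
        field_simp
        ring

theorem contDiff_picard {f : ℝ → ℝ → ℝ} (hf : Continuous (uncurry f)) {y : ℝ → ℝ}
    (hy : Continuous y) (t₀ x₀ : ℝ) : ContDiff ℝ 1 (picard f t₀ x₀ y) := by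
  have hfy : Continuous fun t => f t (y t) := hf.comp (continuous_id.prodMk hy)
  have hderiv : ∀ t, HasDerivAt (picard f t₀ x₀ y) (f t (y t)) t := fun t =>
    ((hfy.integral_hasStrictDerivAt t₀ t).hasDerivAt).const_add x₀
  rw [contDiff_one_iff_deriv]
  exact ⟨fun t => (hderiv t).differentiableAt, by rwa [funext fun t => (hderiv t).deriv]⟩

theorem contDiff_iterate_picard {f : ℝ → ℝ → ℝ} (hf : Continuous (uncurry f)) (t₀ x₀ : ℝ) :
    ∀ n, ContDiff ℝ 1 ((picard f t₀ x₀)^[n] fun _ => x₀)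
  | 0 => contDiff_const
  | n + 1 => by
    rw [iterate_succ_apply']
    exact contDiff_picard hf (contDiff_iterate_picard hf t₀ x₀ n).continuous t₀ x₀

theorem iterate_picard_apply_self (f : ℝ → ℝ → ℝ) (t₀ x₀ : ℝ) (n : ℕ) :
    (picard f t₀ x₀)^[n] (fun _ => x₀) t₀ = x₀ := by
  cases n <;> simp only [iterate_zero_apply, iterate_succ_apply', picard_apply₀]

theorem add_neg_integral_deriv_sub_eq_picard {f : ℝ → ℝ → ℝ} (hf : Continuous (uncurry f))
    {y : ℝ → ℝ} (hy : ContDiff ℝ 1 y) (t₀ t : ℝ) :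
    y t + -1 * ∫ ξ in t₀..t, (deriv y ξ - f ξ (y ξ)) = picard f t₀ (y t₀) y t := by
  have hy' : Continuous (deriv y) := hy.continuous_deriv le_rfl
  have hfy : Continuous fun t => f t (y t) := hf.comp (continuous_id.prodMk hy.continuous)
  rw [integral_sub (hy'.intervalIntegrable _ _) (hfy.intervalIntegrable _ _),
    integral_deriv_eq_sub (fun ξ _ => hy.differentiable one_ne_zero ξ) (hy'.intervalIntegrable _ _),
    picard_apply]
  ring

theorem ifoham_partialSum_eq_iterate_picard {f : ℝ → ℝ → ℝ} (hf : Continuous (uncurry f))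
    {t₀ x₀ : ℝ} {u : ℕ → ℝ → ℝ} (hu0 : ∀ t, u 0 t = x₀)
    (hu : ∀ m t, u (m + 1) t = -1 * ∫ ξ in t₀..t,
      (deriv (fun s => ∑ k ∈ Finset.range (m + 1), u k s) ξ
        - f ξ (∑ k ∈ Finset.range (m + 1), u k ξ))) :
    ∀ n, (fun t => ∑ k ∈ Finset.range (n + 1), u k t) = (picard f t₀ x₀)^[n] fun _ => x₀
  | 0 => funext fun t => by simp [hu0]
  | n + 1 => funext fun t => by
    have ih := ifoham_partialSum_eq_iterate_picard hf hu0 hu n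
    rw [Finset.sum_range_succ, hu, iterate_succ_apply', ← ih]
    refine (add_neg_integral_deriv_sub_eq_picard hf
      (y := fun s => ∑ k ∈ Finset.range (n + 1), u k s) ?_ t₀ t).trans ?_
    · exact ih ▸ contDiff_iterate_picard hf t₀ x₀ n
    · rw [(congrFun ih t₀).trans (iterate_picard_apply_self f t₀ x₀ n), ih]

theorem abs_sub_lt_of_hasDerivAt_of_abs_deriv_le {g g' : ℝ → ℝ} {a t M b : ℝ} (hat : a ≤ t)
    (hM : 0 ≤ M) (hMt : M * (t - a) < b) (hg : ∀ s ∈ Icc a t, HasDerivAt g (g' s) s)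
    (hg' : ∀ s ∈ Icc a t, |g s - g a| < b → |g' s| ≤ M) :
    |g t - g a| < b := by
  -- A barrier of slope `M' > M` is only touched where `g` is still within `b` of `g a`.
  obtain ⟨M', hM'b, hMM'⟩ : ∃ M', M' * (t - a) < b ∧ M < M' :=
    ((((continuous_mul_const (t - a)).tendsto M).eventually (gt_mem_nhds hMt)).filter_mono
      (nhdsWithin_le_nhds (s := Ioi M)) |>.and self_mem_nhdsWithin).exists
  have hbarrier : ∀ s ∈ Icc a t, ‖g s - g a‖ ≤ M' * (s - a) :=
    image_norm_le_of_norm_deriv_right_lt_deriv_boundary (f := fun s => g s - g a) (f' := g')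
      (B' := fun _ => M')
      (fun s hs => ((hg s hs).continuousAt.sub continuousAt_const).continuousWithinAt)
      (fun s hs => ((hg s (Ico_subset_Icc_self hs)).sub_const (g a)).hasDerivWithinAt)
      (by simp) (fun s => by simpa using ((hasDerivAt_id s).sub_const a).const_mul M')
      fun s hs hsB => by
        have hs' : |g s - g a| < b := by
          rw [← Real.norm_eq_abs, hsB]
          exact (mul_le_mul_of_nonneg_left (by linarith [hs.2]) (hM.trans hMM'.le)).trans_lt hM'b
        exact (hg' s (Ico_subset_Icc_self hs) hs').trans_lt hMM'
  exact (hbarrier t (right_mem_Icc.2 hat)).trans_lt hM'b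

section strip

variable {f : ℝ → ℝ → ℝ} {t₀ x₀ b M L : ℝ} {J : Set ℝ}

theorem abs_solution_sub_lt (hJ : J.OrdConnected) (ht₀ : t₀ ∈ J)
    (hfM : ∀ t ∈ J, ∀ y, |y - x₀| ≤ b → |f t y| ≤ M) (hJb : ∀ t ∈ J, M * |t - t₀| < b)
    {x : ℝ → ℝ} (hx0 : x t₀ = x₀) (hx : ∀ t ∈ J, HasDerivAt x (f t (x t)) t) {t : ℝ}
    (ht : t ∈ J) : |x t - x₀| < b := by
  subst hx0
  have hb : 0 < b := by simpa using hJb t₀ ht₀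
  have hM : 0 ≤ M := (abs_nonneg _).trans (hfM t₀ ht₀ (x t₀) (by simpa using hb.le))
  rcases le_total t₀ t with h | h
  · refine abs_sub_lt_of_hasDerivAt_of_abs_deriv_le h hM ?_
      (fun s hs => hx s (hJ.out ht₀ ht hs)) fun s hs hxs => hfM s (hJ.out ht₀ ht hs) _ hxs.le
    simpa [abs_of_nonneg (sub_nonneg.2 h)] using hJb t ht
  · have hmem : ∀ s ∈ Icc (-t₀) (-t), -s ∈ J := fun s hs =>
      hJ.out ht ht₀ ⟨by linarith [hs.2], by linarith [hs.1]⟩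
    have := abs_sub_lt_of_hasDerivAt_of_abs_deriv_le (g := fun s => x (-s)) (neg_le_neg h) hM
      (by simpa [abs_of_nonpos (sub_nonpos.2 h), neg_add_eq_sub] using hJb t ht)
      (fun s hs => (hx (-s) (hmem s hs)).comp s (hasDerivAt_neg s))
      fun s hs hxs => by simpa using hfM (-s) (hmem s hs) _ (by simpa using hxs.le)
    simpa using this

theorem picard_eq_of_forall_hasDerivAt (hJ : J.OrdConnected) (ht₀ : t₀ ∈ J)
    (hf : Continuous (uncurry f))
    {x : ℝ → ℝ} (hx0 : x t₀ = x₀) (hx : ∀ t ∈ J, HasDerivAt x (f t (x t)) t) {t : ℝ}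
    (ht : t ∈ J) : picard f t₀ x₀ x t = x t := by
  subst hx0
  exact picard_eq_of_hasDerivAt (u := univ) hf.continuousOn
    (fun s hs => (hx s (hJ.uIcc_subset ht₀ ht hs)).hasDerivWithinAt) (mapsTo_univ _ _)

theorem abs_picard_sub_le (hJ : J.OrdConnected) (ht₀ : t₀ ∈ J)
    (hfM : ∀ t ∈ J, ∀ y, |y - x₀| ≤ b → |f t y| ≤ M) {y : ℝ → ℝ}
    (hy : ∀ t ∈ J, |y t - x₀| ≤ b) {t : ℝ} (ht : t ∈ J) :
    |picard f t₀ x₀ y t - x₀| ≤ M * |t - t₀| := by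
  rw [picard_apply, add_sub_cancel_left, ← Real.norm_eq_abs]
  refine intervalIntegral.norm_integral_le_of_norm_le_const fun s hs => ?_
  have hs := hJ.uIcc_subset ht₀ ht (uIoc_subset_uIcc hs)
  exact hfM s hs _ (hy s hs)

theorem abs_iterate_picard_sub_le (hJ : J.OrdConnected) (ht₀ : t₀ ∈ J)
    (hfM : ∀ t ∈ J, ∀ y, |y - x₀| ≤ b → |f t y| ≤ M) (hJb : ∀ t ∈ J, M * |t - t₀| ≤ b) :
    ∀ n, ∀ t ∈ J, |(picard f t₀ x₀)^[n] (fun _ => x₀) t - x₀| ≤ b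
  | 0, _, _ => by simpa using hJb t₀ ht₀
  | n + 1, t, ht => by
    rw [iterate_succ_apply']
    exact (abs_picard_sub_le hJ ht₀ hfM (abs_iterate_picard_sub_le hJ ht₀ hfM hJb n) ht).trans
      (hJb t ht)

theorem abs_picard_sub_picard_le (hJ : J.OrdConnected) (ht₀ : t₀ ∈ J)
    (hf : Continuous (uncurry f)) (hL : 0 ≤ L)
    (hfL : ∀ t ∈ J, ∀ y z, |y - x₀| ≤ b → |z - x₀| ≤ b → |f t y - f t z| ≤ L * |y - z|)
    {y z : ℝ → ℝ} (hyc : ContinuousOn y J) (hzc : ContinuousOn z J)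
    (hy : ∀ t ∈ J, |y t - x₀| ≤ b) (hz : ∀ t ∈ J, |z t - x₀| ≤ b) {C : ℝ} {m : ℕ}
    (hyz : ∀ t ∈ J, |y t - z t| ≤ C * (L * |t - t₀|) ^ m / m !) {t : ℝ} (ht : t ∈ J) :
    |picard f t₀ x₀ y t - picard f t₀ x₀ z t| ≤ C * (L * |t - t₀|) ^ (m + 1) / (m + 1)! := by
  have hsub := hJ.uIcc_subset ht₀ ht
  have hint : ∀ w : ℝ → ℝ, ContinuousOn w J →
      IntervalIntegrable (fun s => f s (w s)) volume t₀ t := fun w hw =>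
    (hf.comp_continuousOn (continuousOn_id.prodMk (hw.mono hsub))).intervalIntegrable
  rw [picard_apply, picard_apply, add_sub_add_left_eq_sub,
    ← integral_sub (hint y hyc) (hint z hzc)]
  refine abs_integral_le_pow_div_factorial fun s hs => ?_
  have hs := hsub (uIoc_subset_uIcc hs)
  exact (hfL s hs _ _ (hy s hs) (hz s hs)).trans (mul_le_mul_of_nonneg_left (hyz s hs) hL)

theorem abs_iterate_picard_sub_solution_le (hJ : J.OrdConnected) (ht₀ : t₀ ∈ J)
    (hf : Continuous (uncurry f)) (hL : 0 ≤ L)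
    (hfM : ∀ t ∈ J, ∀ y, |y - x₀| ≤ b → |f t y| ≤ M)
    (hfL : ∀ t ∈ J, ∀ y z, |y - x₀| ≤ b → |z - x₀| ≤ b → |f t y - f t z| ≤ L * |y - z|)
    (hJb : ∀ t ∈ J, M * |t - t₀| < b) {x : ℝ → ℝ} (hx0 : x t₀ = x₀)
    (hx : ∀ t ∈ J, HasDerivAt x (f t (x t)) t) :
    ∀ n, ∀ t ∈ J, |(picard f t₀ x₀)^[n] (fun _ => x₀) t - x t| ≤ b * (L * |t - t₀|) ^ n / n !
  | 0, t, ht => by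
    simpa [abs_sub_comm] using (abs_solution_sub_lt hJ ht₀ hfM hJb hx0 hx ht).le
  | n + 1, t, ht => by
    rw [iterate_succ_apply', ← picard_eq_of_forall_hasDerivAt hJ ht₀ hf hx0 hx ht]
    exact abs_picard_sub_picard_le hJ ht₀ hf hL hfL
      (contDiff_iterate_picard hf t₀ x₀ n).continuous.continuousOn
      (fun s hs => (hx s hs).continuousAt.continuousWithinAt)
      (abs_iterate_picard_sub_le hJ ht₀ hfM (fun s hs => (hJb s hs).le) n)
      (fun s hs => (abs_solution_sub_lt hJ ht₀ hfM hJb hx0 hx hs).le)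
      (abs_iterate_picard_sub_solution_le hJ ht₀ hf hL hfM hfL hJb hx0 hx n) ht

end strip

theorem stmt_2_general (f : ℝ → ℝ → ℝ) (hf : Continuous fun p : ℝ × ℝ => f p.1 p.2)
    (t₀ x₀ a b L M A : ℝ) (ha : 0 < a) (hb : 0 < b)
    (R : Set (ℝ × ℝ)) (hR : R = {p : ℝ × ℝ | |p.1 - t₀| ≤ a ∧ |p.2 - x₀| ≤ b})
    (hLip : ∀ t y z, (t, y) ∈ R → (t, z) ∈ R → |f t y - f t z| ≤ L * |y - z|)
    (hM : IsGreatest ((fun p : ℝ × ℝ => |f p.1 p.2|) '' R) M) (hM0 : 0 < M)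
    (hA : A = min a (b / M))
    (x : ℝ → ℝ) (hx0 : x t₀ = x₀)
    (hxsol : ∀ t ∈ Set.Ioo (t₀ - A) (t₀ + A), HasDerivAt x (f t (x t)) t)
    (c₀ : ℝ) (hc₀ : c₀ = -1)
    (u : ℕ → ℝ → ℝ)
    (hu0 : ∀ t, u 0 t = x₀)
    (hu : ∀ m t, u (m + 1) t =
      c₀ * ∫ ξ in t₀..t,
        (deriv (fun s => ∑ k ∈ Finset.range (m + 1), u k s) ξ
          - f ξ (∑ k ∈ Finset.range (m + 1), u k ξ))) :
    TendstoUniformlyOn (fun n t => ∑ k ∈ Finset.range (n + 1), u k t) x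
      Filter.atTop (Set.Ioo (t₀ - A) (t₀ + A)) := by
  subst hc₀ hR
  have hA0 : 0 < A := hA ▸ lt_min ha (div_pos hb hM0)
  have ht₀ : t₀ ∈ Ioo (t₀ - A) (t₀ + A) := ⟨by linarith, by linarith⟩
  have hI : ∀ t ∈ Ioo (t₀ - A) (t₀ + A), |t - t₀| < A := fun t ht =>
    abs_sub_lt_iff.2 ⟨by linarith [ht.2], by linarith [ht.1]⟩
  have hIb : ∀ t ∈ Ioo (t₀ - A) (t₀ + A), M * |t - t₀| < b := fun t ht => by
    rw [← lt_div_iff₀' hM0]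
    exact (hI t ht).trans_le (hA ▸ min_le_right _ _)
  have hmemR : ∀ t ∈ Ioo (t₀ - A) (t₀ + A), ∀ y, |y - x₀| ≤ b →
      (t, y) ∈ {p : ℝ × ℝ | |p.1 - t₀| ≤ a ∧ |p.2 - x₀| ≤ b} := fun t ht _ hy =>
    ⟨(hI t ht).le.trans (hA ▸ min_le_left _ _), hy⟩
  have hL : 0 ≤ L := by
    have := (abs_nonneg _).trans (hLip t₀ x₀ (x₀ + b) (hmemR t₀ ht₀ x₀ (by simpa using hb.le))
      (hmemR t₀ ht₀ _ (by simp [abs_of_pos hb])))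
    exact nonneg_of_mul_nonneg_left (by simpa [abs_of_pos hb] using this) hb
  have herr := abs_iterate_picard_sub_solution_le ordConnected_Ioo ht₀ hf hL
    (fun t ht y hy => hM.2 ⟨(t, y), hmemR t ht y hy, rfl⟩)
    (fun t ht y z hy hz => hLip t y z (hmemR t ht y hy) (hmemR t ht z hz)) hIb hx0 hxsol
  rw [funext (ifoham_partialSum_eq_iterate_picard hf hu0 hu)]
  refine tendstoUniformlyOn_of_dist_le_of_tendsto (c := fun n => b * (L * A) ^ n / n !)
    (fun n t ht => ?_) ?_
  · rw [dist_comm, Real.dist_eq]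
    calc _ ≤ b * (L * |t - t₀|) ^ n / n ! := herr n t ht
      _ ≤ b * (L * A) ^ n / n ! := by gcongr; exact (hI t ht).le
  · simpa [mul_div_assoc] using
      (FloorSemiring.tendsto_pow_div_factorial_atTop (L * A)).const_mul b

/-- Theorem 2(c): under the Picard–Lindelöf hypotheses, the partial sums of the
IFOHAM sequence with convergence control parameter `c₀ = -1` converge uniformly
on `I = (t₀ - A, t₀ + A)` to the unique solution `x` of the IVP. -/
theorem stmt_2 (f : ℝ → ℝ → ℝ) (hf : Continuous fun p : ℝ × ℝ => f p.1 p.2)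
    (t₀ x₀ a b L M A : ℝ) (ha : 0 < a) (hb : 0 < b)
    (R : Set (ℝ × ℝ)) (hR : R = {p : ℝ × ℝ | |p.1 - t₀| ≤ a ∧ |p.2 - x₀| ≤ b})
    (hLip : ∀ t y z, (t, y) ∈ R → (t, z) ∈ R → |f t y - f t z| ≤ L * |y - z|)
    (hM : IsGreatest ((fun p : ℝ × ℝ => |f p.1 p.2|) '' R) M) (hM0 : 0 < M)
    (hA : A = min a (b / M))
    (x : ℝ → ℝ) (hx0 : x t₀ = x₀)
    (hxsol : ∀ t ∈ Set.Ioo (t₀ - A) (t₀ + A), HasDerivAt x (f t (x t)) t)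
    (hxuniq : ∀ z : ℝ → ℝ, z t₀ = x₀ →
      (∀ t ∈ Set.Ioo (t₀ - A) (t₀ + A), HasDerivAt z (f t (z t)) t) →
      ∀ t ∈ Set.Ioo (t₀ - A) (t₀ + A), z t = x t)
    (c₀ : ℝ) (hc₀ : c₀ = -1)
    (u : ℕ → ℝ → ℝ)
    (hu0 : ∀ t, u 0 t = x₀)
    (hu : ∀ m t, u (m + 1) t =
      c₀ * ∫ ξ in t₀..t,
        (deriv (fun s => ∑ k ∈ Finset.range (m + 1), u k s) ξ
          - f ξ (∑ k ∈ Finset.range (m + 1), u k ξ))) :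
    TendstoUniformlyOn (fun n t => ∑ k ∈ Finset.range (n + 1), u k t) x
      Filter.atTop (Set.Ioo (t₀ - A) (t₀ + A)) :=
  stmt_2_general f hf t₀ x₀ a b L M A ha hb R hR hLip hM hM0 hA x hx0 hxsol c₀ hc₀ u hu0 hu
end

section
/- Let f : ℝ × ℝ → ℝ be continuous, let (t₀, x₀) ∈ ℝ², let a, b > 0, set R = {(t,x) : |t − t₀| ≤ a, |x − x₀| ≤ b}, suppose f is Lipschitz in the second variable on R with constant L, let M = max_{R} |f| with M > 0, and A = min{a, b/M}. Let x : I → ℝ be the unique solution of dx/dt = f(t,x), x(t₀) = x₀, on I = (t₀ − A, t₀ + A). Let c₀ ∈ [−1, 0) and define the IFOHAM sequence u : ℕ → (ℝ → ℝ) by u₀(t) = x₀ and u_{m+1}(t) = c₀ · ∫_{t₀}^{t} [ (d/dξ) Σ_{k=0}^{m} u_k(ξ) − f(ξ, Σ_{k=0}^{m} u_k(ξ)) ] dξ. Then the sequence of partial sums ( Σ_{k=0}^{n} u_k )_{n∈ℕ} converges uniformly on I to the solution x. -/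
/-!
Write `S m` for the partial sums and `r m = S m' - f (t, S m)` for their residuals. The
recursion gives `S (m + 1)' = (1 + c₀) S m' - c₀ f (t, S m)`, a convex combination, so
`|S m'| ≤ M` and every `S m` stays in the rectangle. It also gives
`r (m + 1) = (1 + c₀) r m + f (t, S m) - f (t, S (m + 1))` with `S (m + 1) - S m = c₀ ∫ r m`,
which for `t ≥ t₀` is a contraction with factor `1 + c₀ / (L + 1) < 1` in the weighted norm
`sup |r| e^{-(L + 1)(t - t₀)}`. Grönwall's inequality for `S m - x`, whose derivative is
`r m + f (t, S m) - f (t, x)`, turns `r m → 0` into uniform convergence. A barrier argument keeps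
`x` itself in the rectangle, and the reflection `t ↦ 2 t₀ - t` maps IFOHAM sequences to IFOHAM
sequences, so `t ≤ t₀` reduces to `t ≥ t₀`.
-/

open Set Filter Topology Real intervalIntegral Function

lemma tendstoUniformlyOn_of_abs_sub_le {ι α : Type*} {l : Filter ι} {F : ι → α → ℝ} {g : α → ℝ}
    {s : Set α} {e : ι → ℝ} (h : ∀ n, ∀ t ∈ s, |F n t - g t| ≤ e n)
    (he : Tendsto e l (𝓝 0)) : TendstoUniformlyOn F g l s := by
  rw [Metric.tendstoUniformlyOn_iff]
  intro ε hε
  filter_upwards [he.eventually (gt_mem_nhds hε)] with n hn t ht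
  rw [dist_comm, Real.dist_eq]
  exact (h n t ht).trans_lt hn

lemma abs_sub_le_of_hasDerivAt_of_abs_le {x : ℝ → ℝ} {F : ℝ → ℝ → ℝ} {t₀ A M b : ℝ}
    (hM : 0 < M) (hMA : M * A ≤ b) (hx : ∀ t ∈ Ico t₀ (t₀ + A), HasDerivAt x (F t (x t)) t)
    (hF : ∀ t ∈ Ico t₀ (t₀ + A), ∀ y, |y - x t₀| ≤ b → |F t y| ≤ M) :
    ∀ t ∈ Ico t₀ (t₀ + A), |x t - x t₀| ≤ b := by
  intro t ht
  have hsub : Icc t₀ t ⊆ Ico t₀ (t₀ + A) := Icc_subset_Ico_right ht.2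
  have hlt : M * (t - t₀) < b := (mul_lt_mul_of_pos_left (by linarith [ht.2]) hM).trans_le hMA
  -- the fencing theorem needs a barrier strictly steeper than `M`
  obtain ⟨M', hMM', hM'⟩ : ∃ M' > M, M' * (t - t₀) < b := by
    have hnear : ∀ᶠ M' in 𝓝 M, M' * (t - t₀) < b :=
      ((continuous_mul_const (t - t₀)).tendsto M).eventually_lt_const hlt
    have hright : ∀ᶠ M' in 𝓝[>] M, M < M' := self_mem_nhdsWithin
    exact (hright.and (nhdsWithin_le_nhds hnear)).exists
  have hfence := image_norm_le_of_norm_deriv_right_lt_deriv_boundary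
    (f := fun s ↦ x s - x t₀) (f' := fun s ↦ F s (x s)) (B := fun s ↦ M' * (s - t₀))
    (B' := fun _ ↦ M') (a := t₀) (b := t)
    (fun s hs ↦ ((hx s (hsub hs)).continuousAt.sub continuousAt_const).continuousWithinAt)
    (fun s hs ↦ ((hx s (hsub (Ico_subset_Icc_self hs))).sub_const _).hasDerivWithinAt)
    (by simp) (fun s ↦ by simpa using ((hasDerivAt_id s).sub_const t₀).const_mul M')
    (fun s hs hbd ↦ ?_) ⟨ht.1, le_rfl⟩
  · exact (hfence.trans_lt hM').le
  · have hsb : |x s - x t₀| ≤ b := by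
      rw [Real.norm_eq_abs] at hbd
      rw [hbd]
      nlinarith [hs.1, hs.2]
    exact (hF s (hsub (Ico_subset_Icc_self hs)) _ hsb).trans_lt hMM'

lemma abs_integral_le_of_abs_le_exp {G : ℝ → ℝ} {t₀ t c K : ℝ} (hK : 0 < K) (ht : t₀ ≤ t)
    (hG : ∀ ξ ∈ Icc t₀ t, |G ξ| ≤ c * exp (K * (ξ - t₀))) :
    |∫ ξ in t₀..t, G ξ| ≤ c * exp (K * (t - t₀)) / K := by
  have hc : 0 ≤ c := by simpa using (abs_nonneg _).trans (hG t₀ ⟨le_rfl, ht⟩)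
  have hexp : Continuous fun ξ ↦ c * exp (K * (ξ - t₀)) := by fun_prop
  calc |∫ ξ in t₀..t, G ξ|
      ≤ ∫ ξ in t₀..t, c * exp (K * (ξ - t₀)) :=
        norm_integral_le_of_norm_le (f := G) ht
          (MeasureTheory.ae_of_all _ fun ξ hξ ↦ hG ξ (Ioc_subset_Icc_self hξ))
          (hexp.intervalIntegrable _ _)
    _ = c * (exp (K * (t - t₀)) - 1) / K := by
        simp only [mul_sub, integral_const_mul, integral_comp_mul_sub _ hK.ne', integral_exp,
          sub_self, exp_zero, smul_eq_mul]
        ring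
    _ ≤ c * exp (K * (t - t₀)) / K := by gcongr; linarith

namespace Ifoham

noncomputable def partialSum (u : ℕ → ℝ → ℝ) (m : ℕ) (t : ℝ) : ℝ :=
  ∑ k ∈ Finset.range (m + 1), u k t

noncomputable def residual (f : ℝ → ℝ → ℝ) (S : ℝ → ℝ) (t : ℝ) : ℝ :=
  deriv S t - f t (S t)

structure IsSeq (f : ℝ → ℝ → ℝ) (t₀ x₀ c₀ : ℝ) (u : ℕ → ℝ → ℝ) : Prop where
  zero : ∀ t, u 0 t = x₀
  succ : ∀ m t, u (m + 1) t = c₀ * ∫ ξ in t₀..t, residual f (partialSum u m) ξ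

/-- The contraction factor of the residuals for the weight `exp ((L + 1) (t - t₀))`. -/
noncomputable def rate (L c₀ : ℝ) : ℝ := 1 + c₀ / (L + 1)

lemma rate_nonneg {L c₀ : ℝ} (hL : 0 ≤ L) (hc₀ : -1 ≤ c₀) : 0 ≤ rate L c₀ := by
  have : -1 ≤ c₀ / (L + 1) := by
    rw [le_div_iff₀ (by linarith)]
    linarith
  rw [rate]
  linarith

lemma rate_lt_one {L c₀ : ℝ} (hL : 0 ≤ L) (hc₀ : c₀ < 0) : rate L c₀ < 1 := by
  rw [rate, add_lt_iff_neg_left]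
  exact div_neg_of_neg_of_pos hc₀ (by linarith)

noncomputable def errorBound (L M A c₀ : ℝ) (m : ℕ) : ℝ :=
  gronwallBound 0 L (M * rate L c₀ ^ m * exp ((L + 1) * A)) A

lemma tendsto_errorBound {L M A c₀ : ℝ} (hL : 0 ≤ L) (hc₀ : c₀ ∈ Ico (-1) 0) :
    Tendsto (errorBound L M A c₀) atTop (𝓝 0) := by
  have hε : Tendsto (fun m ↦ M * rate L c₀ ^ m * exp ((L + 1) * A)) atTop (𝓝 0) := by
    simpa using ((tendsto_pow_atTop_nhds_zero_of_lt_one (rate_nonneg hL hc₀.1)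
      (rate_lt_one hL hc₀.2)).const_mul M).mul_const (exp ((L + 1) * A))
  have := ((gronwallBound_continuous_ε 0 L A).tendsto 0).comp hε
  rw [gronwallBound_ε0_δ0] at this
  exact this

variable {f : ℝ → ℝ → ℝ} {u : ℕ → ℝ → ℝ} {t₀ x₀ c₀ L M A b : ℝ}

lemma partialSum_succ (u : ℕ → ℝ → ℝ) (m : ℕ) (t : ℝ) :
    partialSum u (m + 1) t = partialSum u m t + u (m + 1) t :=
  Finset.sum_range_succ _ _

lemma continuous_residual (hf : Continuous (uncurry f)) {S : ℝ → ℝ} (hS : ContDiff ℝ 1 S) :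
    Continuous (residual f S) :=
  (hS.continuous_deriv le_rfl).sub (hf.comp (continuous_id.prodMk hS.continuous))

namespace IsSeq

lemma partialSum_zero (hu : IsSeq f t₀ x₀ c₀ u) : partialSum u 0 = fun _ ↦ x₀ := by
  funext t
  simp [partialSum, hu.zero]

lemma partialSum_succ_eq (hu : IsSeq f t₀ x₀ c₀ u) (m : ℕ) (t : ℝ) :
    partialSum u (m + 1) t =
      partialSum u m t + c₀ * ∫ ξ in t₀..t, residual f (partialSum u m) ξ := by
  rw [partialSum_succ, hu.succ]

lemma partialSum_apply_self (hu : IsSeq f t₀ x₀ c₀ u) (m : ℕ) : partialSum u m t₀ = x₀ := by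
  induction m with
  | zero => simp [hu.partialSum_zero]
  | succ m ih => simp [hu.partialSum_succ_eq, ih]

lemma hasDerivAt_partialSum_succ (hu : IsSeq f t₀ x₀ c₀ u) (hf : Continuous (uncurry f))
    {m : ℕ} (hS : ContDiff ℝ 1 (partialSum u m)) (t : ℝ) :
    HasDerivAt (partialSum u (m + 1))
      (deriv (partialSum u m) t + c₀ * residual f (partialSum u m) t) t := by
  rw [funext (hu.partialSum_succ_eq m)]
  exact (hS.differentiable one_ne_zero t).hasDerivAt.add
    (((continuous_residual hf hS).integral_hasStrictDerivAt t₀ t).hasDerivAt.const_mul c₀)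

lemma contDiff_partialSum (hu : IsSeq f t₀ x₀ c₀ u) (hf : Continuous (uncurry f)) :
    ∀ m, ContDiff ℝ 1 (partialSum u m)
  | 0 => by
    rw [hu.partialSum_zero]
    exact contDiff_const
  | m + 1 => by
    have hS := hu.contDiff_partialSum hf m
    have hd := hu.hasDerivAt_partialSum_succ hf hS
    rw [contDiff_one_iff_deriv, funext fun t ↦ (hd t).deriv]
    exact ⟨fun t ↦ (hd t).differentiableAt,
      (hS.continuous_deriv le_rfl).add (continuous_const.mul (continuous_residual hf hS))⟩

lemma deriv_partialSum_succ (hu : IsSeq f t₀ x₀ c₀ u) (hf : Continuous (uncurry f)) (m : ℕ)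
    (t : ℝ) : deriv (partialSum u (m + 1)) t =
      deriv (partialSum u m) t + c₀ * residual f (partialSum u m) t :=
  (hu.hasDerivAt_partialSum_succ hf (hu.contDiff_partialSum hf m) t).deriv

lemma residual_succ (hu : IsSeq f t₀ x₀ c₀ u) (hf : Continuous (uncurry f)) (m : ℕ) (t : ℝ) :
    residual f (partialSum u (m + 1)) t = (1 + c₀) * residual f (partialSum u m) t +
      (f t (partialSum u m t) - f t (partialSum u (m + 1) t)) := by
  rw [residual, hu.deriv_partialSum_succ hf, residual]
  ring

lemma reflect (hu : IsSeq f t₀ x₀ c₀ u) :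
    IsSeq (fun t y ↦ -f (2 * t₀ - t) y) t₀ x₀ c₀ (fun k t ↦ u k (2 * t₀ - t)) where
  zero t := hu.zero _
  succ m t := by
    have hr : ∀ η, residual (fun t y ↦ -f (2 * t₀ - t) y)
        (partialSum (fun k t ↦ u k (2 * t₀ - t)) m) η =
          -residual f (partialSum u m) (2 * t₀ - η) := by
      intro η
      rw [residual, residual, show partialSum (fun k t ↦ u k (2 * t₀ - t)) m =
        fun t ↦ partialSum u m (2 * t₀ - t) from rfl, deriv_comp_const_sub]
      ring
    simp only [hr, integral_neg, integral_comp_sub_left, hu.succ, integral_symm (2 * t₀ - t),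
      show 2 * t₀ - t₀ = t₀ by ring]

lemma abs_partialSum_sub_le_of_abs_deriv_le (hu : IsSeq f t₀ x₀ c₀ u)
    (hf : Continuous (uncurry f)) (hMA : M * A ≤ b) {m : ℕ}
    (hD : ∀ t ∈ Ico t₀ (t₀ + A), |deriv (partialSum u m) t| ≤ M) :
    ∀ t ∈ Ico t₀ (t₀ + A), |partialSum u m t - x₀| ≤ b := by
  intro t ht
  have hM : 0 ≤ M := (abs_nonneg _).trans (hD t ht)
  have hmv := (convex_Ico t₀ (t₀ + A)).norm_image_sub_le_of_norm_deriv_le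
    (fun s _ ↦ (hu.contDiff_partialSum hf m).differentiable one_ne_zero s) hD
    (left_mem_Ico.2 (ht.1.trans_lt ht.2)) ht
  rw [hu.partialSum_apply_self, Real.norm_eq_abs, Real.norm_eq_abs,
    abs_of_nonneg (sub_nonneg.2 ht.1)] at hmv
  calc |partialSum u m t - x₀| ≤ M * (t - t₀) := hmv
    _ ≤ M * A := by gcongr; linarith [ht.2]
    _ ≤ b := hMA

lemma abs_deriv_partialSum_le (hu : IsSeq f t₀ x₀ c₀ u) (hf : Continuous (uncurry f))
    (hc₀ : c₀ ∈ Icc (-1) 0) (hM : 0 ≤ M) (hMA : M * A ≤ b)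
    (hfM : ∀ t ∈ Ico t₀ (t₀ + A), ∀ y, |y - x₀| ≤ b → |f t y| ≤ M) :
    ∀ m, ∀ t ∈ Ico t₀ (t₀ + A), |deriv (partialSum u m) t| ≤ M
  | 0, t, _ => by simp [hu.partialSum_zero, hM]
  | m + 1, t, ht => by
    have hD := hu.abs_deriv_partialSum_le hf hc₀ hM hMA hfM m
    have hF := hfM t ht _ (hu.abs_partialSum_sub_le_of_abs_deriv_le hf hMA hD t ht)
    have h₁ : 0 ≤ 1 + c₀ := by linarith [hc₀.1]
    have h₂ : 0 ≤ -c₀ := by linarith [hc₀.2]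
    calc |deriv (partialSum u (m + 1)) t|
        = |(1 + c₀) * deriv (partialSum u m) t + (-c₀) * f t (partialSum u m t)| := by
          rw [hu.deriv_partialSum_succ hf, residual]
          ring_nf
      _ ≤ (1 + c₀) * M + (-c₀) * M := by
          refine (abs_add_le _ _).trans ?_
          rw [abs_mul, abs_mul, abs_of_nonneg h₁, abs_of_nonneg h₂]
          exact add_le_add (mul_le_mul_of_nonneg_left (hD t ht) h₁)
            (mul_le_mul_of_nonneg_left hF h₂)
      _ = M := by ring

lemma abs_partialSum_sub_le (hu : IsSeq f t₀ x₀ c₀ u) (hf : Continuous (uncurry f))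
    (hc₀ : c₀ ∈ Icc (-1) 0) (hM : 0 ≤ M) (hMA : M * A ≤ b)
    (hfM : ∀ t ∈ Ico t₀ (t₀ + A), ∀ y, |y - x₀| ≤ b → |f t y| ≤ M) (m : ℕ) :
    ∀ t ∈ Ico t₀ (t₀ + A), |partialSum u m t - x₀| ≤ b :=
  hu.abs_partialSum_sub_le_of_abs_deriv_le hf hMA (hu.abs_deriv_partialSum_le hf hc₀ hM hMA hfM m)

lemma abs_residual_succ_le (hu : IsSeq f t₀ x₀ c₀ u) (hf : Continuous (uncurry f))
    (hc₀ : c₀ ∈ Icc (-1) 0) (hL : 0 ≤ L)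
    (hLip : ∀ t ∈ Ico t₀ (t₀ + A), ∀ y z, |y - x₀| ≤ b → |z - x₀| ≤ b →
      |f t y - f t z| ≤ L * |y - z|)
    (hS : ∀ m, ∀ t ∈ Ico t₀ (t₀ + A), |partialSum u m t - x₀| ≤ b) {m : ℕ} {E : ℝ}
    (hE : ∀ t ∈ Ico t₀ (t₀ + A),
      |residual f (partialSum u m) t| ≤ E * exp ((L + 1) * (t - t₀))) :
    ∀ t ∈ Ico t₀ (t₀ + A), |residual f (partialSum u (m + 1)) t| ≤
      rate L c₀ * E * exp ((L + 1) * (t - t₀)) := by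
  intro t ht
  have h₁ : 0 ≤ 1 + c₀ := by linarith [hc₀.1]
  have hint : |∫ ξ in t₀..t, residual f (partialSum u m) ξ| ≤
      E * exp ((L + 1) * (t - t₀)) / (L + 1) :=
    abs_integral_le_of_abs_le_exp (by linarith) ht.1 fun ξ hξ ↦
      hE ξ ⟨hξ.1, hξ.2.trans_lt ht.2⟩
  have hΔ : |f t (partialSum u m t) - f t (partialSum u (m + 1) t)| ≤
      L * (-c₀ * (E * exp ((L + 1) * (t - t₀)) / (L + 1))) :=
    calc |f t (partialSum u m t) - f t (partialSum u (m + 1) t)|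
        ≤ L * |partialSum u m t - partialSum u (m + 1) t| :=
          hLip t ht _ _ (hS m t ht) (hS (m + 1) t ht)
      _ = L * (-c₀ * |∫ ξ in t₀..t, residual f (partialSum u m) ξ|) := by
          rw [hu.partialSum_succ_eq, sub_add_cancel_left, abs_neg, abs_mul, abs_of_nonpos hc₀.2]
      _ ≤ L * (-c₀ * (E * exp ((L + 1) * (t - t₀)) / (L + 1))) := by
          gcongr
          linarith [hc₀.2]
  rw [hu.residual_succ hf]
  calc |(1 + c₀) * residual f (partialSum u m) t +
        (f t (partialSum u m t) - f t (partialSum u (m + 1) t))|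
      ≤ (1 + c₀) * |residual f (partialSum u m) t| +
        |f t (partialSum u m t) - f t (partialSum u (m + 1) t)| :=
        (abs_add_le _ _).trans_eq (by rw [abs_mul, abs_of_nonneg h₁])
    _ ≤ (1 + c₀) * (E * exp ((L + 1) * (t - t₀))) +
        L * (-c₀ * (E * exp ((L + 1) * (t - t₀)) / (L + 1))) :=
        add_le_add (mul_le_mul_of_nonneg_left (hE t ht) h₁) hΔ
    _ = rate L c₀ * E * exp ((L + 1) * (t - t₀)) := by
        rw [rate]
        field_simp
        ring

lemma abs_residual_le (hu : IsSeq f t₀ x₀ c₀ u) (hf : Continuous (uncurry f))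
    (hc₀ : c₀ ∈ Icc (-1) 0) (hL : 0 ≤ L) (hM : 0 ≤ M) (hMA : M * A ≤ b)
    (hfM : ∀ t ∈ Ico t₀ (t₀ + A), ∀ y, |y - x₀| ≤ b → |f t y| ≤ M)
    (hLip : ∀ t ∈ Ico t₀ (t₀ + A), ∀ y z, |y - x₀| ≤ b → |z - x₀| ≤ b →
      |f t y - f t z| ≤ L * |y - z|) :
    ∀ m, ∀ t ∈ Ico t₀ (t₀ + A), |residual f (partialSum u m) t| ≤
      M * rate L c₀ ^ m * exp ((L + 1) * (t - t₀))
  | 0, t, ht => by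
    have hF := hfM t ht _ (hu.abs_partialSum_sub_le hf hc₀ hM hMA hfM 0 t ht)
    have hexp : 1 ≤ exp ((L + 1) * (t - t₀)) :=
      one_le_exp (mul_nonneg (by linarith) (sub_nonneg.2 ht.1))
    rw [residual, hu.partialSum_zero] at *
    rw [deriv_const, zero_sub, abs_neg, pow_zero, mul_one]
    exact hF.trans (le_mul_of_one_le_right hM hexp)
  | m + 1, t, ht =>
    (hu.abs_residual_succ_le hf hc₀ hL hLip (hu.abs_partialSum_sub_le hf hc₀ hM hMA hfM)
      (hu.abs_residual_le hf hc₀ hL hM hMA hfM hLip m) t ht).trans_eq (by ring)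

theorem abs_partialSum_sub_le_errorBound_of_le (hu : IsSeq f t₀ x₀ c₀ u)
    (hf : Continuous (uncurry f)) (hc₀ : c₀ ∈ Icc (-1) 0) (hL : 0 ≤ L) (hM : 0 < M)
    (hMA : M * A ≤ b) (hfM : ∀ t ∈ Ico t₀ (t₀ + A), ∀ y, |y - x₀| ≤ b → |f t y| ≤ M)
    (hLip : ∀ t ∈ Ico t₀ (t₀ + A), ∀ y z, |y - x₀| ≤ b → |z - x₀| ≤ b →
      |f t y - f t z| ≤ L * |y - z|)
    {x : ℝ → ℝ} (hx0 : x t₀ = x₀) (hx : ∀ t ∈ Ico t₀ (t₀ + A), HasDerivAt x (f t (x t)) t)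
    (m : ℕ) : ∀ t ∈ Ico t₀ (t₀ + A), |partialSum u m t - x t| ≤ errorBound L M A c₀ m := by
  intro t ht
  have hxb : ∀ s ∈ Ico t₀ (t₀ + A), |x s - x₀| ≤ b := by
    have := abs_sub_le_of_hasDerivAt_of_abs_le hM hMA hx (by rwa [hx0])
    rwa [hx0] at this
  have hS := hu.abs_partialSum_sub_le hf hc₀ hM.le hMA hfM m
  have hq := rate_nonneg hL hc₀.1
  set ε := M * rate L c₀ ^ m * exp ((L + 1) * A) with hε_def
  have hε : 0 ≤ ε := by positivity
  have hsub : Icc t₀ t ⊆ Ico t₀ (t₀ + A) := Icc_subset_Ico_right ht.2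
  have hderiv : ∀ s ∈ Icc t₀ t, HasDerivAt (fun s ↦ partialSum u m s - x s)
      (deriv (partialSum u m) s - f s (x s)) s := fun s hs ↦
    ((hu.contDiff_partialSum hf m).differentiable one_ne_zero s).hasDerivAt.sub (hx s (hsub hs))
  have hbound : ∀ s ∈ Ico t₀ t, ‖deriv (partialSum u m) s - f s (x s)‖ ≤
      L * ‖partialSum u m s - x s‖ + ε := by
    intro s hs
    have hs' := hsub (Ico_subset_Icc_self hs)
    have hr : |residual f (partialSum u m) s| ≤ ε :=
      (hu.abs_residual_le hf hc₀ hL hM.le hMA hfM hLip m s hs').trans (by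
        rw [hε_def]
        gcongr
        linarith [hs'.2])
    rw [Real.norm_eq_abs, Real.norm_eq_abs, show deriv (partialSum u m) s - f s (x s) =
      residual f (partialSum u m) s + (f s (partialSum u m s) - f s (x s)) by rw [residual]; ring]
    linarith [abs_add_le (residual f (partialSum u m) s) (f s (partialSum u m s) - f s (x s)),
      hLip s hs' _ _ (hS s hs') (hxb s hs')]
  have hgr : |partialSum u m t - x t| ≤ gronwallBound 0 L ε (t - t₀) := by
    simpa only [Real.norm_eq_abs] using norm_le_gronwallBound_of_norm_deriv_right_le
      (fun s hs ↦ (hderiv s hs).continuousAt.continuousWithinAt)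
      (fun s hs ↦ (hderiv s (Ico_subset_Icc_self hs)).hasDerivWithinAt)
      (by simp [hu.partialSum_apply_self, hx0]) hbound t ⟨ht.1, le_rfl⟩
  exact hgr.trans (gronwallBound_mono le_rfl hε hL (by linarith [ht.2]))

theorem abs_partialSum_sub_le_errorBound (hu : IsSeq f t₀ x₀ c₀ u)
    (hf : Continuous (uncurry f)) (hc₀ : c₀ ∈ Icc (-1) 0) (hL : 0 ≤ L) (hM : 0 < M)
    (hMA : M * A ≤ b) (hfM : ∀ t ∈ Metric.ball t₀ A, ∀ y, |y - x₀| ≤ b → |f t y| ≤ M)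
    (hLip : ∀ t ∈ Metric.ball t₀ A, ∀ y z, |y - x₀| ≤ b → |z - x₀| ≤ b →
      |f t y - f t z| ≤ L * |y - z|)
    {x : ℝ → ℝ} (hx0 : x t₀ = x₀) (hx : ∀ t ∈ Metric.ball t₀ A, HasDerivAt x (f t (x t)) t)
    (m : ℕ) : ∀ t ∈ Metric.ball t₀ A, |partialSum u m t - x t| ≤ errorBound L M A c₀ m := by
  have hIco : Ico t₀ (t₀ + A) ⊆ Metric.ball t₀ A := fun s hs ↦ by
    rw [Real.ball_eq_Ioo]
    exact ⟨by linarith [hs.1, hs.2], hs.2⟩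
  have hrefl : ∀ s ∈ Ico t₀ (t₀ + A), 2 * t₀ - s ∈ Metric.ball t₀ A := fun s hs ↦ by
    simpa [Real.dist_eq, abs_sub_comm, two_mul] using hIco hs
  intro t ht
  rw [Real.ball_eq_Ioo] at ht
  rcases le_total t₀ t with h | h
  · exact hu.abs_partialSum_sub_le_errorBound_of_le hf hc₀ hL hM hMA
      (fun s hs ↦ hfM s (hIco hs)) (fun s hs ↦ hLip s (hIco hs)) hx0 (fun s hs ↦ hx s (hIco hs))
      m t ⟨h, ht.2⟩
  · have := hu.reflect.abs_partialSum_sub_le_errorBound_of_le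
      (show Continuous fun p : ℝ × ℝ ↦ -f (2 * t₀ - p.1) p.2 from
        (hf.comp ((continuous_const.sub continuous_fst).prodMk continuous_snd)).neg)
      hc₀ hL hM hMA (fun s hs y hy ↦ by simpa using hfM _ (hrefl s hs) y hy)
      (fun s hs y z hy hz ↦ by
        rw [neg_sub_neg, abs_sub_comm y]
        exact hLip _ (hrefl s hs) z y hz hy)
      (x := fun s ↦ x (2 * t₀ - s)) (by simpa [two_mul] using hx0)
      (fun s hs ↦ HasDerivAt.comp_const_sub (2 * t₀) s (hx _ (hrefl s hs)))
      m (2 * t₀ - t) ⟨by linarith, by linarith [ht.1]⟩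
    simpa only [partialSum, sub_sub_cancel] using this

end IsSeq

end Ifoham

open Ifoham in
theorem stmt_5_general (f : ℝ → ℝ → ℝ) (hf : Continuous fun p : ℝ × ℝ => f p.1 p.2)
    (t₀ x₀ a b L M A : ℝ) (hb : 0 < b)
    (R : Set (ℝ × ℝ)) (hR : R = {p : ℝ × ℝ | |p.1 - t₀| ≤ a ∧ |p.2 - x₀| ≤ b})
    (hLip : ∀ t y z, (t, y) ∈ R → (t, z) ∈ R → |f t y - f t z| ≤ L * |y - z|)
    (hM : IsGreatest ((fun p : ℝ × ℝ => |f p.1 p.2|) '' R) M) (hM0 : 0 < M)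
    (hA : A = min a (b / M))
    (x : ℝ → ℝ) (hx0 : x t₀ = x₀)
    (hxsol : ∀ t ∈ Set.Ioo (t₀ - A) (t₀ + A), HasDerivAt x (f t (x t)) t)
    (c₀ : ℝ) (hc₀ : c₀ ∈ Set.Ico (-1 : ℝ) 0)
    (u : ℕ → ℝ → ℝ)
    (hu0 : ∀ t, u 0 t = x₀)
    (hu : ∀ m t, u (m + 1) t =
      c₀ * ∫ ξ in t₀..t,
        (deriv (fun s => ∑ k ∈ Finset.range (m + 1), u k s) ξ
          - f ξ (∑ k ∈ Finset.range (m + 1), u k ξ))) :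
    TendstoUniformlyOn (fun n t => ∑ k ∈ Finset.range (n + 1), u k t) x
      Filter.atTop (Set.Ioo (t₀ - A) (t₀ + A)) := by
  rw [← Real.ball_eq_Ioo] at hxsol ⊢
  have hmemR : ∀ t ∈ Metric.ball t₀ A, ∀ y, |y - x₀| ≤ b → (t, y) ∈ R := fun t ht y hy ↦
    hR ▸ ⟨(Real.dist_eq t t₀ ▸ (Metric.mem_ball.1 ht).le).trans (hA ▸ min_le_left _ _), hy⟩
  have hMA : M * A ≤ b := hA ▸ (mul_le_mul_of_nonneg_left (min_le_right _ _) hM0.le).trans_eq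
    (mul_div_cancel₀ _ hM0.ne')
  have hL : 0 ≤ L := by
    obtain ⟨⟨t, y⟩, ht, -⟩ := hM.1
    have hmem : ∀ {y}, |y - x₀| ≤ b → (t, y) ∈ R := fun hy ↦ hR ▸ ⟨(hR ▸ ht).1, hy⟩
    have := hLip t (x₀ + b) x₀ (hmem (by simp [abs_of_pos hb])) (hmem (by simp [hb.le]))
    rw [add_sub_cancel_left, abs_of_pos hb] at this
    nlinarith [abs_nonneg (f t (x₀ + b) - f t x₀)]
  exact tendstoUniformlyOn_of_abs_sub_le
    (IsSeq.abs_partialSum_sub_le_errorBound ⟨hu0, hu⟩ hf (Ico_subset_Icc_self hc₀) hL hM0 hMA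
      (fun t ht y hy ↦ hM.2 ⟨(t, y), hmemR t ht y hy, rfl⟩)
      (fun t ht y z hy hz ↦ hLip t y z (hmemR t ht y hy) (hmemR t ht z hz)) hx0 hxsol)
    (tendsto_errorBound hL hc₀)

/-- Proposition 5 (part 1): under the Picard–Lindelöf hypotheses and for any
convergence control parameter `c₀ ∈ [-1, 0)`, the partial sums of the IFOHAM
sequence converge uniformly on `I = (t₀ - A, t₀ + A)` to the unique solution. -/
theorem stmt_5 (f : ℝ → ℝ → ℝ) (hf : Continuous fun p : ℝ × ℝ => f p.1 p.2)
    (t₀ x₀ a b L M A : ℝ) (ha : 0 < a) (hb : 0 < b)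
    (R : Set (ℝ × ℝ)) (hR : R = {p : ℝ × ℝ | |p.1 - t₀| ≤ a ∧ |p.2 - x₀| ≤ b})
    (hLip : ∀ t y z, (t, y) ∈ R → (t, z) ∈ R → |f t y - f t z| ≤ L * |y - z|)
    (hM : IsGreatest ((fun p : ℝ × ℝ => |f p.1 p.2|) '' R) M) (hM0 : 0 < M)
    (hA : A = min a (b / M))
    (x : ℝ → ℝ) (hx0 : x t₀ = x₀)
    (hxsol : ∀ t ∈ Set.Ioo (t₀ - A) (t₀ + A), HasDerivAt x (f t (x t)) t)
    (hxuniq : ∀ z : ℝ → ℝ, z t₀ = x₀ →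
      (∀ t ∈ Set.Ioo (t₀ - A) (t₀ + A), HasDerivAt z (f t (z t)) t) →
      ∀ t ∈ Set.Ioo (t₀ - A) (t₀ + A), z t = x t)
    (c₀ : ℝ) (hc₀ : c₀ ∈ Set.Ico (-1 : ℝ) 0)
    (u : ℕ → ℝ → ℝ)
    (hu0 : ∀ t, u 0 t = x₀)
    (hu : ∀ m t, u (m + 1) t =
      c₀ * ∫ ξ in t₀..t,
        (deriv (fun s => ∑ k ∈ Finset.range (m + 1), u k s) ξ
          - f ξ (∑ k ∈ Finset.range (m + 1), u k ξ))) :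
    TendstoUniformlyOn (fun n t => ∑ k ∈ Finset.range (n + 1), u k t) x
      Filter.atTop (Set.Ioo (t₀ - A) (t₀ + A)) :=
  stmt_5_general f hf t₀ x₀ a b L M A hb R hR hLip hM hM0 hA x hx0 hxsol c₀ hc₀ u hu0 hu
end

section
/- Let (t₀, x₀) ∈ ℝ², a, b > 0, R = {(t,x) : |t − t₀| ≤ a, |x − x₀| ≤ b}, let f : ℝ × ℝ → ℝ be continuous and Lipschitz in the second variable on R with constant L > 0, let M = max_{R} |f| with M > 0, A = min{a, b/M}, and J = [t₀ − A, t₀ + A]. Let S = { x ∈ C(J) : |x(t) − x₀| ≤ b for all t ∈ J }, and for c₀ ∈ ℝ define the operator F on C(J) by F(x)(t) = (1 + c₀)·x(t) − c₀·( x₀ + ∫_{t₀}^{t} f(ξ, x(ξ)) dξ ). If c₀ ∈ [−1, 0], then F maps S into S, i.e. for every continuous x : J → ℝ with sup_{t∈J} |x(t) − x₀| ≤ b, one has sup_{t∈J} |F(x)(t) − x₀| ≤ b. -/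
/-!
`F(x) - x₀ = (1 + c₀)·(x - x₀) + (-c₀)·(P(x) - x₀)`, where `P` is the Picard operator, so for
`c₀ ∈ [-1, 0]` it is a convex combination of two points of the ball `|·| ≤ b`. The first lies
there by assumption; for the second, `|P(x)(t) - x₀| ≤ M·|t - t₀| ≤ M·A ≤ b` since the graph of
`x` over `J` stays in the rectangle `R`, where `|f| ≤ M`.
-/

open Set

lemma abs_one_add_mul_sub_mul_le {c u v b : ℝ} (hc : c ∈ Icc (-1 : ℝ) 0)
    (hu : |u| ≤ b) (hv : |v| ≤ b) : |(1 + c) * u - c * v| ≤ b := by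
  have hu' : u ∈ Metric.closedBall (0 : ℝ) b := by simpa using hu
  have hv' : v ∈ Metric.closedBall (0 : ℝ) b := by simpa using hv
  have := convex_closedBall (0 : ℝ) b hu' hv' (show 0 ≤ 1 + c by linarith [hc.1])
    (neg_nonneg.2 hc.2) (add_neg_cancel_right 1 c)
  simpa [smul_eq_mul, sub_eq_add_neg] using this

lemma abs_intervalIntegral_le_mul_of_forall_mem_Icc {g : ℝ → ℝ} {t₀ t A M : ℝ}
    (ht : t ∈ Icc (t₀ - A) (t₀ + A)) (hg : ∀ ξ ∈ Icc (t₀ - A) (t₀ + A), |g ξ| ≤ M) :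
    |∫ ξ in t₀..t, g ξ| ≤ M * A := by
  have hA : 0 ≤ A := by linarith [ht.1.trans ht.2]
  have ht₀ : t₀ ∈ Icc (t₀ - A) (t₀ + A) := ⟨by linarith, by linarith⟩
  have hsub : uIoc t₀ t ⊆ Icc (t₀ - A) (t₀ + A) :=
    uIoc_subset_uIcc.trans (uIcc_subset_Icc ht₀ ht)
  calc |∫ ξ in t₀..t, g ξ| ≤ M * |t - t₀| :=
        intervalIntegral.norm_integral_le_of_norm_le_const (f := g) fun ξ hξ => hg ξ (hsub hξ)
    _ ≤ M * A := by
        rw [abs_sub_comm]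
        exact mul_le_mul_of_nonneg_left (mem_Icc_iff_abs_le.2 ht)
          ((abs_nonneg _).trans (hg t ht))

lemma mul_min_div_le {M a b : ℝ} (hM : 0 < M) : M * min a (b / M) ≤ b :=
  calc M * min a (b / M) ≤ M * (b / M) := mul_le_mul_of_nonneg_left (min_le_right _ _) hM.le
    _ = b := mul_div_cancel₀ b hM.ne'

theorem stmt_6_general (f : ℝ → ℝ → ℝ)
    (t₀ x₀ a b M A : ℝ)
    (R : Set (ℝ × ℝ)) (hR : R = {p : ℝ × ℝ | |p.1 - t₀| ≤ a ∧ |p.2 - x₀| ≤ b})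
    (hM : IsGreatest ((fun p : ℝ × ℝ => |f p.1 p.2|) '' R) M) (hM0 : 0 < M)
    (hA : A = min a (b / M))
    (c₀ : ℝ) (hc₀ : c₀ ∈ Set.Icc (-1 : ℝ) 0)
    (x : ℝ → ℝ)
    (hxb : ∀ t ∈ Set.Icc (t₀ - A) (t₀ + A), |x t - x₀| ≤ b) :
    ∀ t ∈ Set.Icc (t₀ - A) (t₀ + A),
      |((1 + c₀) * x t - c₀ * (x₀ + ∫ ξ in t₀..t, f ξ (x ξ))) - x₀| ≤ b := by
  intro t ht
  have hgraph : ∀ ξ ∈ Icc (t₀ - A) (t₀ + A), (ξ, x ξ) ∈ R := fun ξ hξ => by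
    rw [hR]
    exact ⟨(abs_sub_comm ξ t₀).trans_le ((mem_Icc_iff_abs_le.2 hξ).trans (hA ▸ min_le_left a _)),
      hxb ξ hξ⟩
  have hI : |∫ ξ in t₀..t, f ξ (x ξ)| ≤ b :=
    (abs_intervalIntegral_le_mul_of_forall_mem_Icc ht fun ξ hξ =>
      hM.2 ⟨_, hgraph ξ hξ, rfl⟩).trans (hA ▸ mul_min_div_le hM0)
  calc |((1 + c₀) * x t - c₀ * (x₀ + ∫ ξ in t₀..t, f ξ (x ξ))) - x₀|
      = |(1 + c₀) * (x t - x₀) - c₀ * ∫ ξ in t₀..t, f ξ (x ξ)| := by ring_nf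
    _ ≤ b := abs_one_add_mul_sub_mul_le hc₀ (hxb t ht) hI

/-- The IFOHAM fixed-point operator
`F(x)(t) = (1 + c₀)·x(t) - c₀·(x₀ + ∫ₜ₀ᵗ f(ξ, x ξ) dξ)` maps the closed ball
`S = {x ∈ C(J) : |x(t) - x₀| ≤ b on J}` into itself whenever `c₀ ∈ [-1, 0]`. -/
theorem stmt_6 (f : ℝ → ℝ → ℝ) (hf : Continuous fun p : ℝ × ℝ => f p.1 p.2)
    (t₀ x₀ a b L M A : ℝ) (ha : 0 < a) (hb : 0 < b) (hL : 0 < L)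
    (R : Set (ℝ × ℝ)) (hR : R = {p : ℝ × ℝ | |p.1 - t₀| ≤ a ∧ |p.2 - x₀| ≤ b})
    (hLip : ∀ t y z, (t, y) ∈ R → (t, z) ∈ R → |f t y - f t z| ≤ L * |y - z|)
    (hM : IsGreatest ((fun p : ℝ × ℝ => |f p.1 p.2|) '' R) M) (hM0 : 0 < M)
    (hA : A = min a (b / M))
    (c₀ : ℝ) (hc₀ : c₀ ∈ Set.Icc (-1 : ℝ) 0)
    (x : ℝ → ℝ) (hxc : ContinuousOn x (Set.Icc (t₀ - A) (t₀ + A)))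
    (hxb : ∀ t ∈ Set.Icc (t₀ - A) (t₀ + A), |x t - x₀| ≤ b) :
    ∀ t ∈ Set.Icc (t₀ - A) (t₀ + A),
      |((1 + c₀) * x t - c₀ * (x₀ + ∫ ξ in t₀..t, f ξ (x ξ))) - x₀| ≤ b :=
  stmt_6_general f t₀ x₀ a b M A R hR hM hM0 hA c₀ hc₀ x hxb
end

section
/- Let t₀ ∈ ℝ, A > 0, J = [t₀ − A, t₀ + A], and let L̃ > 0. For any continuous functions x, y : J → ℝ, define ‖x − y‖_e = max_{t∈J} |(x(t) − y(t))·e^{−L̃|t − t₀|}|. Then max_{t∈J} e^{−L̃|t−t₀|} · | ∫_{t₀}^{t} |x(ξ) − y(ξ)| dξ | ≤ ( ‖x − y‖_e / L̃ ) · (1 − e^{−L̃ A} ). -/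
/-!
The maximality of `normE` gives the pointwise bound `|x ξ - y ξ| ≤ normE · e^{L̃|ξ-t₀|}` on `J`.
Integrating it from `t₀` to `t` yields `normE · (e^{L̃|t-t₀|} - 1) / L̃`, and multiplying by
`e^{-L̃|t-t₀|}` leaves `normE / L̃ · (1 - e^{-L̃|t-t₀|})`, which increases with `|t - t₀| ≤ A`.
-/

open Real Set MeasureTheory intervalIntegral
open scoped Interval

theorem integral_exp_const_mul {c : ℝ} (hc : c ≠ 0) (a b : ℝ) :
    ∫ x in a..b, exp (c * x) = (exp (c * b) - exp (c * a)) / c := by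
  rw [integral_comp_mul_left exp hc, integral_exp, smul_eq_mul, inv_mul_eq_div]

theorem abs_integral_exp_mul_abs {L : ℝ} (hL : 0 < L) (s : ℝ) :
    |∫ u in (0 : ℝ)..s, exp (L * |u|)| = (exp (L * |s|) - 1) / L := by
  wlog hs : 0 ≤ s generalizing s
  · have hreflect := integral_comp_neg (a := s) (b := 0) fun u => exp (L * |u|)
    simp only [abs_neg, neg_zero] at hreflect
    rw [integral_symm, hreflect, abs_neg, this (-s) (by linarith), abs_neg]
  have hexp : ∫ u in (0 : ℝ)..s, exp (L * |u|) = ∫ u in (0 : ℝ)..s, exp (L * u) :=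
    integral_congr fun u hu => by
      rw [uIcc_of_le hs] at hu
      rw [abs_of_nonneg hu.1]
  rw [hexp, integral_exp_const_mul hL.ne', mul_zero, exp_zero, abs_of_nonneg hs]
  exact abs_of_nonneg (div_nonneg (by simp [hs, hL.le, mul_nonneg]) hL.le)

theorem abs_intervalIntegral_le_abs_of_nonneg_of_le {μ : Measure ℝ} {f g : ℝ → ℝ} {a b : ℝ}
    (hf : ∀ x ∈ Ι a b, 0 ≤ f x) (hfg : ∀ x ∈ Ι a b, f x ≤ g x)
    (hg : IntervalIntegrable g μ a b) :
    |∫ x in a..b, f x ∂μ| ≤ |∫ x in a..b, g x ∂μ| :=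
  calc |∫ x in a..b, f x ∂μ| = |∫ x in Ι a b, f x ∂μ| := abs_integral_eq_abs_integral_uIoc f
    _ = ∫ x in Ι a b, f x ∂μ := abs_of_nonneg (setIntegral_nonneg measurableSet_uIoc hf)
    _ ≤ ∫ x in Ι a b, g x ∂μ :=
      integral_mono_of_nonneg (ae_restrict_of_forall_mem measurableSet_uIoc hf) hg.def'
        (ae_restrict_of_forall_mem measurableSet_uIoc hfg)
    _ ≤ |∫ x in Ι a b, g x ∂μ| := le_abs_self _
    _ = |∫ x in a..b, g x ∂μ| := (abs_integral_eq_abs_integral_uIoc g).symm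

theorem abs_le_mul_exp_of_abs_mul_exp_neg_le {z a E : ℝ} (h : |z * exp (-a)| ≤ E) :
    |z| ≤ E * exp a := by
  rwa [abs_mul, abs_of_pos (exp_pos _), exp_neg, ← div_eq_mul_inv, div_le_iff₀ (exp_pos a)] at h

theorem stmt_7_general (t₀ A Lt : ℝ) (hLt : 0 < Lt)
    (x y : ℝ → ℝ)
    (normE : ℝ)
    (hnormE : IsGreatest
      ((fun t => |(x t - y t) * Real.exp (-Lt * |t - t₀|)|) ''
        Set.Icc (t₀ - A) (t₀ + A)) normE) :
    ∀ t ∈ Set.Icc (t₀ - A) (t₀ + A),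
      Real.exp (-Lt * |t - t₀|) * |(∫ ξ in t₀..t, |x ξ - y ξ|)|
        ≤ (normE / Lt) * (1 - Real.exp (-Lt * A)) := by
  intro t ht
  have hE : 0 ≤ normE := by
    obtain ⟨s, -, rfl⟩ := hnormE.1
    positivity
  have hdist : |t - t₀| ≤ A := abs_sub_le_iff.mpr ⟨by linarith [ht.2], by linarith [ht.1]⟩
  have ht₀ : t₀ ∈ Icc (t₀ - A) (t₀ + A) :=
    ⟨by linarith [abs_nonneg (t - t₀)], by linarith [abs_nonneg (t - t₀)]⟩
  have hbound : ∀ ξ ∈ Ι t₀ t, |x ξ - y ξ| ≤ normE * exp (Lt * |ξ - t₀|) := fun ξ hξ =>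
    abs_le_mul_exp_of_abs_mul_exp_neg_le <| by
      rw [← neg_mul]
      exact hnormE.2 ⟨ξ, uIcc_subset_Icc ht₀ ht (uIoc_subset_uIcc hξ), rfl⟩
  have hshift : ∫ ξ in t₀..t, exp (Lt * |ξ - t₀|) = ∫ u in (0 : ℝ)..t - t₀, exp (Lt * |u|) := by
    rw [integral_comp_sub_right (fun u => exp (Lt * |u|)) t₀, sub_self]
  calc exp (-Lt * |t - t₀|) * |(∫ ξ in t₀..t, |x ξ - y ξ|)|
      ≤ exp (-Lt * |t - t₀|) * |∫ ξ in t₀..t, normE * exp (Lt * |ξ - t₀|)| :=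
      mul_le_mul_of_nonneg_left (abs_intervalIntegral_le_abs_of_nonneg_of_le
        (fun _ _ => abs_nonneg _) hbound ((by fun_prop : Continuous _).intervalIntegrable _ _))
        (exp_pos _).le
    _ = exp (-Lt * |t - t₀|) * (normE * ((exp (Lt * |t - t₀|) - 1) / Lt)) := by
        rw [intervalIntegral.integral_const_mul, abs_mul, abs_of_nonneg hE, hshift,
          abs_integral_exp_mul_abs hLt]
    _ = normE / Lt * (1 - exp (-Lt * |t - t₀|)) := by
        rw [neg_mul, exp_neg]
        field_simp
    _ ≤ normE / Lt * (1 - exp (-Lt * A)) := by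
        rw [neg_mul, neg_mul]
        gcongr

/-- Bielecki-norm estimate: for continuous `x, y` on `J = [t₀ - A, t₀ + A]`,
`max_{t∈J} e^{-L̃|t-t₀|}·|∫ₜ₀ᵗ |x(ξ) - y(ξ)| dξ| ≤ (‖x - y‖ₑ / L̃)·(1 - e^{-L̃A})`,
where `‖z‖ₑ = max_{t∈J} |z(t)·e^{-L̃|t-t₀|}|`. -/
theorem stmt_7 (t₀ A Lt : ℝ) (hA : 0 < A) (hLt : 0 < Lt)
    (x y : ℝ → ℝ)
    (hx : ContinuousOn x (Set.Icc (t₀ - A) (t₀ + A)))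
    (hy : ContinuousOn y (Set.Icc (t₀ - A) (t₀ + A)))
    (normE : ℝ)
    (hnormE : IsGreatest
      ((fun t => |(x t - y t) * Real.exp (-Lt * |t - t₀|)|) ''
        Set.Icc (t₀ - A) (t₀ + A)) normE) :
    ∀ t ∈ Set.Icc (t₀ - A) (t₀ + A),
      Real.exp (-Lt * |t - t₀|) * |(∫ ξ in t₀..t, |x ξ - y ξ|)|
        ≤ (normE / Lt) * (1 - Real.exp (-Lt * A)) :=
  stmt_7_general t₀ A Lt hLt x y normE hnormE
end
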